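/- Let G be a cactus graph with basic 5-cycle on y1,y4,y2,y3,y5 (cyclic order, y3,y4,y5 of degree 2), with T, T_1, T_2 as above. Suppose S1 = {y2,y4,y5} ∪ U1 ∪ U2 and S2 = {y1,y3,y4} ∪ V1 ∪ V2 are vertex covers of G, where U_a, V_a ⊆ T_a for a = 1,2. Then W1 = {y3,y4,y5} ∪ U1 ∪ V2 and W2 = {y1,y2,y3} ∪ V1 ∪ U2 are also vertex covers of G. -/

import Mathlib

/-- `C` is a vertex cover of `G`: every edge has at least one endpoint in `C`. -/
def IsVC {V : Type*} (G : SimpleGraph V) (C : Set V) : Prop :=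
  ∀ ⦃u v : V⦄, G.Adj u v → u ∈ C ∨ v ∈ C

/-- The graph obtained from `G` by deleting the vertices in `s` (keeping the ambient
vertex type): the induced subgraph of `G` on `V(G) \ s`. -/
def delGraph {V : Type*} (G : SimpleGraph V) (s : Set V) : SimpleGraph V where
  Adj u v := G.Adj u v ∧ u ∉ s ∧ v ∉ s
  symm := ⟨fun u v ⟨h, hu, hv⟩ => ⟨h.symm, hv, hu⟩⟩
  loopless := ⟨fun u ⟨h, _, _⟩ => G.loopless.irrefl u h⟩

/-- `G` is a cactus graph: it is connected and each edge belongs to at most one cycle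
(cycles being identified with their edge sets). -/
def IsCactus {V : Type*} (G : SimpleGraph V) : Prop :=
  G.Connected ∧
    ∀ (u v : V) (c : G.Walk u u) (c' : G.Walk v v), c.IsCycle → c'.IsCycle →
      ∀ e, e ∈ c.edges → e ∈ c'.edges → {e' | e' ∈ c.edges} = {e' | e' ∈ c'.edges}

/-- With `T` the induced subgraph of `G` on `V(G) \ {y3,y4,y5}`, the set `T_a` of
vertices of `T` other than `y1, y2` joined to `ya` by a path in `T`. -/
def sideSet {V : Type*} (G : SimpleGraph V) (y1 y2 y3 y4 y5 ya : V) : Set V :=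
  {z | z ∉ ({y1, y2, y3, y4, y5} : Set V) ∧
    (delGraph G {y3, y4, y5}).Reachable z ya}

/-!
`y1` and `y2` lie in different components of `T`: a `y1`–`y2` path in `T` closes, through `y4`,
a cycle sharing the edge `y2y4` with the basic 5-cycle but missing its edge `y3y5`, which a
cactus forbids. Hence, with `K` the component of `y1` in `T`, we have `T_1 ⊆ K` and `T_2 ∩ K = ∅`,
and no edge of `T` leaves `K`. Covering the edges of `T` by `S1` inside `K` and by `S2` outside
`K` only uses vertices of `W1`, and swapping the roles of `S1, S2` only uses vertices of `W2`.
The remaining edges meet `{y3, y4, y5} ⊆ W1`, and each has an end in `{y1, y2, y3} ⊆ W2`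
since all neighbours of `y4` and `y5` lie there.
-/

open SimpleGraph

section VertexCover

variable {V : Type*} {G H : SimpleGraph V} {s C C₁ C₂ K : Set V}

theorem IsVC.mono (h : IsVC G C) (hC : C ⊆ C₁) : IsVC G C₁ :=
  fun _ _ huv => (h huv).imp (@hC _) (@hC _)

theorem IsVC.piecewise (h₁ : IsVC H C₁) (h₂ : IsVC H C₂)
    (hK : ∀ ⦃u v⦄, H.Adj u v → u ∈ K → v ∈ K) : IsVC H (C₁ ∩ K ∪ C₂ \ K) := by
  intro u v huv
  by_cases hu : u ∈ K
  · exact (h₁ huv).imp (fun h => .inl ⟨h, hu⟩) (fun h => .inl ⟨h, hK huv hu⟩)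
  · have hv : v ∉ K := fun hv => hu (hK huv.symm hv)
    exact (h₂ huv).imp (fun h => .inr ⟨h, hu⟩) (fun h => .inr ⟨h, hv⟩)

theorem IsVC.delGraph_diff (h : IsVC G C) : IsVC (delGraph G s) (C \ s) :=
  fun _ _ ⟨huv, hu, hv⟩ => (h huv).imp (⟨·, hu⟩) (⟨·, hv⟩)

theorem IsVC.of_delGraph (h : IsVC (delGraph G s) C)
    (hs : ∀ ⦃u v⦄, G.Adj u v → u ∈ s → u ∈ C ∨ v ∈ C) : IsVC G C := by
  intro u v huv
  by_cases hu : u ∈ s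
  · exact hs huv hu
  by_cases hv : v ∈ s
  · exact (hs huv.symm hv).symm
  exact h ⟨huv, hu, hv⟩

end VertexCover

section DeleteVertices

variable {V : Type*} {G : SimpleGraph V} {s : Set V}

theorem delGraph_le (G : SimpleGraph V) (s : Set V) : delGraph G s ≤ G :=
  fun _ _ h => h.1

theorem delGraph.notMem_of_mem_support {u v w : V} (p : (delGraph G s).Walk u v) (hv : v ∉ s)
    (hw : w ∈ p.support) : w ∉ s := by
  obtain rfl | ⟨e, he, hwe⟩ := Walk.mem_support_iff_exists_mem_edges.mp hw
  · exact hv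
  · induction e using Sym2.ind with
    | h a b =>
      have hab : (delGraph G s).Adj a b := p.edges_subset_edgeSet he
      rcases Sym2.mem_iff.mp hwe with rfl | rfl
      exacts [hab.2.1, hab.2.2]

end DeleteVertices

theorem not_reachable_delGraph_of_isCactus {V : Type*} {G : SimpleGraph V} {y1 y2 y3 y4 y5 : V}
    (hG : IsCactus G) (hne : List.Pairwise Ne [y1, y2, y3, y4, y5])
    (h14 : G.Adj y1 y4) (h42 : G.Adj y4 y2) (h23 : G.Adj y2 y3)
    (h35 : G.Adj y3 y5) (h51 : G.Adj y5 y1) :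
    ¬ (delGraph G {y3, y4, y5}).Reachable y1 y2 := by
  simp only [List.pairwise_cons, List.mem_cons, List.not_mem_nil, forall_eq_or_imp, or_false,
    forall_eq, List.Pairwise.nil, IsEmpty.forall_iff, implies_true, and_true] at hne
  obtain ⟨⟨n12, n13, n14, n15⟩, ⟨n23, n24, n25⟩, ⟨n34, n35⟩, n45⟩ := hne
  rintro ⟨q⟩
  classical
  let p : G.Walk y1 y2 := q.toPath.1.mapLe (delGraph_le G _)
  have hp : p.IsPath := q.toPath.2.mapLe _
  have hy2 : y2 ∉ ({y3, y4, y5} : Set V) := by simp [n23, n24, n25]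
  have hoff : ∀ w ∈ p.support, w ∉ ({y3, y4, y5} : Set V) := fun w hw =>
    delGraph.notMem_of_mem_support _ hy2 (by rwa [Walk.support_mapLe_eq_support] at hw)
  let c : G.Walk y2 y2 := .cons h42.symm (.cons h14.symm p)
  have hc : c.IsCycle := by
    refine (Walk.cons_isCycle_iff _ _).mpr ⟨(Walk.cons_isPath_iff _ _).mpr
      ⟨hp, fun h => hoff _ h (by simp)⟩, ?_⟩
    simp only [Walk.edges_cons, List.mem_cons, Sym2.eq_iff, not_or]
    exact ⟨by tauto, fun h => hoff _ (p.snd_mem_support_of_mem_edges h) (by simp)⟩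
  let c₅ : G.Walk y2 y2 :=
    .cons h42.symm (.cons h14.symm (.cons h51.symm (.cons h35.symm (.cons h23.symm .nil))))
  have hc₅ : c₅.IsCycle := by
    simp [c₅, Walk.cons_isCycle_iff, n12, n13, n15, n23, n24, n25, n45, n12.symm, n14.symm,
      n23.symm, n24.symm, n25.symm, n34.symm, n35.symm]
  have h35c : s(y3, y5) ∈ c.edges := by
    have := hG.2 _ _ c₅ c hc₅ hc s(y2, y4) (by simp [c₅]) (by simp [c])
    exact (Set.ext_iff.mp this _).mp (by simp [c₅])
  simp only [c, Walk.edges_cons, List.mem_cons, Sym2.eq_iff] at h35c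
  rcases h35c with (⟨h, -⟩ | ⟨h, -⟩) | (⟨h, -⟩ | ⟨h, -⟩) | h
  · exact n23 h.symm
  · exact n34 h
  · exact n34 h
  · exact n13 h.symm
  · exact hoff _ (p.fst_mem_support_of_mem_edges h) (by simp)

theorem swap_covers_case_yi3_general {V : Type*} (G : SimpleGraph V)
    (y1 y2 y3 y4 y5 : V)
    (hcactus : IsCactus G)
    (hne : List.Pairwise Ne [y1, y2, y3, y4, y5])
    (h14 : G.Adj y1 y4) (h42 : G.Adj y4 y2) (h23 : G.Adj y2 y3)
    (h35 : G.Adj y3 y5) (h51 : G.Adj y5 y1)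
    (hy4 : ∀ z, G.Adj y4 z → z = y1 ∨ z = y2)
    (hy5 : ∀ z, G.Adj y5 z → z = y3 ∨ z = y1)
    (U1 U2 V1 V2 : Set V)
    (hU1 : U1 ⊆ sideSet G y1 y2 y3 y4 y5 y1) (hU2 : U2 ⊆ sideSet G y1 y2 y3 y4 y5 y2)
    (hV1 : V1 ⊆ sideSet G y1 y2 y3 y4 y5 y1) (hV2 : V2 ⊆ sideSet G y1 y2 y3 y4 y5 y2)
    (hS1 : IsVC G (({y2, y4, y5} : Set V) ∪ U1 ∪ U2))
    (hS2 : IsVC G (({y1, y3, y4} : Set V) ∪ V1 ∪ V2)) :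
    IsVC G (({y3, y4, y5} : Set V) ∪ U1 ∪ V2) ∧
      IsVC G (({y1, y2, y3} : Set V) ∪ V1 ∪ U2) := by
  set s : Set V := {y3, y4, y5}
  set D := delGraph G s
  set K : Set V := {z | D.Reachable z y1}
  have hy12 : ¬ D.Reachable y1 y2 :=
    not_reachable_delGraph_of_isCactus hcactus hne h14 h42 h23 h35 h51
  have hK : ∀ ⦃u v⦄, D.Adj u v → u ∈ K → v ∈ K := fun _ _ huv hu => huv.reachable.symm.trans hu
  have hy1K : y1 ∈ K := Reachable.refl _
  have hU1K : ∀ z ∈ U1, z ∈ K := fun z hz => (hU1 hz).2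
  have hV1K : ∀ z ∈ V1, z ∈ K := fun z hz => (hV1 hz).2
  have hU2K : ∀ z ∈ U2, z ∉ K := fun z hz hzK => hy12 (hzK.symm.trans (hU2 hz).2)
  have hV2K : ∀ z ∈ V2, z ∉ K := fun z hz hzK => hy12 (hzK.symm.trans (hV2 hz).2)
  have hy2K : y2 ∉ K := fun h => hy12 h.symm
  constructor
  · refine ((hS1.delGraph_diff.piecewise hS2.delGraph_diff hK).mono ?_).of_delGraph
      fun _ _ _ hu => .inl (.inl (.inl hu))
    intro z hz
    simp only [Set.mem_union, Set.mem_inter_iff, Set.mem_sdiff, Set.mem_insert_iff,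
      Set.mem_singleton_iff] at hz ⊢
    aesop
  · refine ((hS2.delGraph_diff.piecewise hS1.delGraph_diff hK).mono ?_).of_delGraph ?_
    · intro z hz
      simp only [Set.mem_union, Set.mem_inter_iff, Set.mem_sdiff, Set.mem_insert_iff,
        Set.mem_singleton_iff] at hz ⊢
      aesop
    · rintro u v huv (rfl | rfl | rfl)
      · simp
      · rcases hy4 v huv with rfl | rfl <;> simp
      · rcases hy5 v huv with rfl | rfl <;> simp

/-- Swapping the side parts of two vertex covers: if `S1 = {y2,y4,y5} ∪ U1 ∪ U2` and
`S2 = {y1,y3,y4} ∪ V1 ∪ V2` are vertex covers of `G` (with `Ua, Va ⊆ T_a`), then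
`W1 = {y3,y4,y5} ∪ U1 ∪ V2` and `W2 = {y1,y2,y3} ∪ V1 ∪ U2` are vertex covers too. -/
theorem swap_covers_case_yi3 {V : Type*} (G : SimpleGraph V)
    (y1 y2 y3 y4 y5 : V)
    (hcactus : IsCactus G)
    (hne : List.Pairwise Ne [y1, y2, y3, y4, y5])
    (h14 : G.Adj y1 y4) (h42 : G.Adj y4 y2) (h23 : G.Adj y2 y3)
    (h35 : G.Adj y3 y5) (h51 : G.Adj y5 y1)
    (h12 : ¬ G.Adj y1 y2)
    (hy3 : ∀ z, G.Adj y3 z → z = y2 ∨ z = y5)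
    (hy4 : ∀ z, G.Adj y4 z → z = y1 ∨ z = y2)
    (hy5 : ∀ z, G.Adj y5 z → z = y3 ∨ z = y1)
    (U1 U2 V1 V2 : Set V)
    (hU1 : U1 ⊆ sideSet G y1 y2 y3 y4 y5 y1) (hU2 : U2 ⊆ sideSet G y1 y2 y3 y4 y5 y2)
    (hV1 : V1 ⊆ sideSet G y1 y2 y3 y4 y5 y1) (hV2 : V2 ⊆ sideSet G y1 y2 y3 y4 y5 y2)
    (hS1 : IsVC G (({y2, y4, y5} : Set V) ∪ U1 ∪ U2))
    (hS2 : IsVC G (({y1, y3, y4} : Set V) ∪ V1 ∪ V2)) :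
    IsVC G (({y3, y4, y5} : Set V) ∪ U1 ∪ V2) ∧
      IsVC G (({y1, y2, y3} : Set V) ∪ V1 ∪ U2) :=
  swap_covers_case_yi3_general G y1 y2 y3 y4 y5 hcactus hne h14 h42 h23 h35 h51 hy4 hy5 U1 U2 V1 V2
    hU1 hU2 hV1 hV2 hS1 hS2
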